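/- arXiv:2309.13422 — 3 statements merged into one kernel-verified Lean document; each statement's English description precedes it below -/
import Mathlib

section
/- For every x>0, v>0 and every β∈(0,1], one has ∫₀^∞ |φ(x,u,v)| du ≤ 8·K₀(βv), and likewise for every u>0, v>0 and β∈(0,1], ∫₀^∞ |φ(x,u,v)| dx ≤ 8·K₀(βv). -/
open MeasureTheory Real Set

/-- The kernel function φ(x,u,v). -/
noncomputable def phiKer (x u v : ℝ) : ℝ :=
  Real.exp (-v * Real.cosh (x + u - 1)) + Real.exp (-v * Real.cosh (x - u + 1))
    - Real.exp (-v * Real.cosh (x + u + 1)) - Real.exp (-v * Real.cosh (x - u - 1))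

/-- The modified Bessel function of the second kind of order zero. -/
noncomputable def K0 (v : ℝ) : ℝ := ∫ t in Set.Ioi (0 : ℝ), Real.exp (-v * Real.cosh t)

/-- The trigonometric-weighted generalized convolution (f ⋆ g). -/
noncomputable def gconv (f g : ℝ → ℝ) (x : ℝ) : ℝ :=
  (1 / 4) * ∫ v in Set.Ioi (0 : ℝ), ∫ u in Set.Ioi (0 : ℝ), phiKer x u v * f u * g v

/-- Fourier cosine transform. -/
noncomputable def Fc (f : ℝ → ℝ) (y : ℝ) : ℝ :=
  Real.sqrt (2 / Real.pi) * ∫ x in Set.Ioi (0 : ℝ), f x * Real.cos (x * y)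

/-- Fourier sine transform. -/
noncomputable def Fs (f : ℝ → ℝ) (y : ℝ) : ℝ :=
  Real.sqrt (2 / Real.pi) * ∫ x in Set.Ioi (0 : ℝ), f x * Real.sin (x * y)

/-- Modified Bessel function K_{iy}(x). -/
noncomputable def Kiy (y x : ℝ) : ℝ :=
  ∫ u in Set.Ioi (0 : ℝ), Real.exp (-x * Real.cosh u) * Real.cos (y * u)

/-- Kontorovich–Lebedev transform. -/
noncomputable def KL (g : ℝ → ℝ) (y : ℝ) : ℝ := ∫ x in Set.Ioi (0 : ℝ), Kiy y x * g x

/-- Fourier cosine convolution. -/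
noncomputable def fcConv (f g : ℝ → ℝ) (x : ℝ) : ℝ :=
  (1 / Real.sqrt (2 * Real.pi)) * ∫ u in Set.Ioi (0 : ℝ), f u * (g |x - u| + g (x + u))

/-- Fourier sine–cosine generalized convolution. -/
noncomputable def fscConv (f g : ℝ → ℝ) (x : ℝ) : ℝ :=
  (1 / Real.sqrt (2 * Real.pi)) * ∫ u in Set.Ioi (0 : ℝ), f u * (g |x - u| - g (x + u))

lemma cosh_lb (t : ℝ) : |t| ≤ Real.cosh t ∧ t ^ 2 / 8 ≤ Real.cosh t := by
  have h1 := Real.add_one_le_exp (|t| / 2)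
  have h2 : Real.exp (|t| / 2) * Real.exp (|t| / 2) = Real.exp |t| := by
    rw [← Real.exp_add]; ring_nf
  have h3 : Real.exp |t| ≤ 2 * Real.cosh t := by
    rcases abs_cases t with ⟨h, _⟩ | ⟨h, _⟩ <;> rw [h, Real.cosh_eq]
    · nlinarith [Real.exp_pos (-t)]
    · nlinarith [Real.exp_pos t]
  constructor <;> nlinarith [Real.exp_pos (|t| / 2), abs_nonneg t, sq_nonneg (1 - |t| / 2), sq_abs t]

lemma h_int {v : ℝ} (hv : 0 < v) : Integrable (fun t : ℝ => Real.exp (-v * Real.cosh t)) := by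
  have hg : Integrable (fun t : ℝ => Real.exp (-(v / 8) * t ^ 2)) :=
    integrable_exp_neg_mul_sq (by linarith)
  refine hg.mono' (Continuous.aestronglyMeasurable (by continuity)) ?_
  filter_upwards with t
  rw [Real.norm_eq_abs, abs_of_pos (Real.exp_pos _), Real.exp_le_exp]
  have := (cosh_lb t).2
  nlinarith

lemma g_int {v : ℝ} (hv : 0 < v) (c : ℝ) :
    Integrable (fun t : ℝ => Real.exp (-v * Real.cosh (t + c))) := by
  have := (measurePreserving_add_right (volume : Measure ℝ) c).integrable_comp
    (h_int hv).aestronglyMeasurable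
  exact this.mpr (h_int hv)

lemma K0_eq_half (v : ℝ) (hv : 0 < v) :
    (∫ t : ℝ, Real.exp (-v * Real.cosh t)) = 2 * K0 v := by
  have hsplit := intervalIntegral.integral_Iic_add_Ioi (b := (0 : ℝ))
    (f := fun t : ℝ => Real.exp (-v * Real.cosh t))
    ((h_int hv).integrableOn) ((h_int hv).integrableOn)
  have hneg : (∫ t in Iic (0 : ℝ), Real.exp (-v * Real.cosh t)) = K0 v := by
    rw [show Iic (0 : ℝ) = Iic (-0) by norm_num,
      ← integral_comp_neg_Ioi (0 : ℝ) (fun t => Real.exp (-v * Real.cosh t))]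
    simp only [Real.cosh_neg]
    rfl
  rw [← hsplit, hneg, K0]; ring

lemma term_bound {v : ℝ} (hv : 0 < v) (c : ℝ) :
    (∫ t in Ioi (0 : ℝ), Real.exp (-v * Real.cosh (t + c))) ≤ 2 * K0 v := by
  have h1 : (∫ t in Ioi (0 : ℝ), Real.exp (-v * Real.cosh (t + c)))
      ≤ ∫ t : ℝ, Real.exp (-v * Real.cosh (t + c)) := by
    refine setIntegral_le_integral (g_int hv c) ?_
    filter_upwards with t using (Real.exp_pos _).le
  have h2 : (∫ t : ℝ, Real.exp (-v * Real.cosh (t + c)))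
      = ∫ t : ℝ, Real.exp (-v * Real.cosh t) :=
    integral_add_right_eq_self (fun t => Real.exp (-v * Real.cosh t)) c
  rw [h2, K0_eq_half v hv] at h1
  exact h1

lemma K0_mono {a b : ℝ} (ha : 0 < a) (hab : a ≤ b) : K0 b ≤ K0 a := by
  refine setIntegral_mono_on ((h_int (lt_of_lt_of_le ha hab)).integrableOn)
    ((h_int ha).integrableOn) measurableSet_Ioi ?_
  intro t _
  rw [Real.exp_le_exp]
  have h1 : (1 : ℝ) ≤ Real.cosh t := Real.one_le_cosh t
  nlinarith

lemma main_bound {v : ℝ} (hv : 0 < v) (f : ℝ → ℝ) (c₁ c₂ c₃ c₄ : ℝ)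
    (hf : ∀ t, f t = Real.exp (-v * Real.cosh (t + c₁)) + Real.exp (-v * Real.cosh (t + c₂))
      - Real.exp (-v * Real.cosh (t + c₃)) - Real.exp (-v * Real.cosh (t + c₄))) :
    (∫ t in Ioi (0 : ℝ), |f t|) ≤ 8 * K0 v := by
  set g : ℝ → ℝ := fun t => Real.exp (-v * Real.cosh (t + c₁)) + Real.exp (-v * Real.cosh (t + c₂))
      + Real.exp (-v * Real.cosh (t + c₃)) + Real.exp (-v * Real.cosh (t + c₄)) with hg
  have hgint : Integrable g := ((((g_int hv c₁).add (g_int hv c₂)).add (g_int hv c₃)).add (g_int hv c₄))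
  have hfint : Integrable f := by
    have : Integrable (fun t => Real.exp (-v * Real.cosh (t + c₁)) + Real.exp (-v * Real.cosh (t + c₂))
      - Real.exp (-v * Real.cosh (t + c₃)) - Real.exp (-v * Real.cosh (t + c₄))) :=
      (((g_int hv c₁).add (g_int hv c₂)).sub (g_int hv c₃)).sub (g_int hv c₄)
    exact this.congr (by filter_upwards with t using (hf t).symm)
  have hle : (∫ t in Ioi (0 : ℝ), |f t|) ≤ ∫ t in Ioi (0 : ℝ), g t := by
    refine setIntegral_mono hfint.abs.integrableOn hgint.integrableOn ?_
    intro t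
    show |f t| ≤ g t
    rw [hf t, hg]
    rw [abs_le]
    constructor <;> beta_reduce <;>
      nlinarith [Real.exp_pos (-v * Real.cosh (t + c₁)), Real.exp_pos (-v * Real.cosh (t + c₂)),
        Real.exp_pos (-v * Real.cosh (t + c₃)), Real.exp_pos (-v * Real.cosh (t + c₄))]
  have hsum : (∫ t in Ioi (0 : ℝ), g t)
      = (∫ t in Ioi (0 : ℝ), Real.exp (-v * Real.cosh (t + c₁)))
      + (∫ t in Ioi (0 : ℝ), Real.exp (-v * Real.cosh (t + c₂)))
      + (∫ t in Ioi (0 : ℝ), Real.exp (-v * Real.cosh (t + c₃)))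
      + (∫ t in Ioi (0 : ℝ), Real.exp (-v * Real.cosh (t + c₄))) := by
    have i1 : Integrable (fun t : ℝ => Real.exp (-v * Real.cosh (t + c₁))
        + Real.exp (-v * Real.cosh (t + c₂))) := (g_int hv c₁).add (g_int hv c₂)
    have i2 : Integrable (fun t : ℝ => Real.exp (-v * Real.cosh (t + c₁))
        + Real.exp (-v * Real.cosh (t + c₂)) + Real.exp (-v * Real.cosh (t + c₃))) :=
      i1.add (g_int hv c₃)
    rw [hg]
    rw [integral_add i2.integrableOn (g_int hv c₄).integrableOn,
       integral_add i1.integrableOn (g_int hv c₃).integrableOn,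
       integral_add (g_int hv c₁).integrableOn (g_int hv c₂).integrableOn]
  have := term_bound hv c₁
  have := term_bound hv c₂
  have := term_bound hv c₃
  have := term_bound hv c₄
  linarith [hle, hsum.le, hsum.ge]

theorem kernel_integral_bounds :
    (∀ x v β : ℝ, 0 < x → 0 < v → β ∈ Set.Ioc (0 : ℝ) 1 →
      (∫ u in Set.Ioi (0 : ℝ), |phiKer x u v|) ≤ 8 * K0 (β * v)) ∧
    (∀ u v β : ℝ, 0 < u → 0 < v → β ∈ Set.Ioc (0 : ℝ) 1 →
      (∫ x in Set.Ioi (0 : ℝ), |phiKer x u v|) ≤ 8 * K0 (β * v)) := by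
  have key : ∀ v β : ℝ, 0 < v → β ∈ Set.Ioc (0 : ℝ) 1 → 8 * K0 v ≤ 8 * K0 (β * v) := by
    intro v β hv hβ
    have hβv : 0 < β * v := mul_pos hβ.1 hv
    have : β * v ≤ v := by nlinarith [hβ.2]
    linarith [K0_mono hβv this]
  constructor
  · intro x v β hx hv hβ
    refine le_trans (main_bound hv (fun u => phiKer x u v)
      (x - 1) (-(x + 1)) (x + 1) (-(x - 1)) ?_) (key v β hv hβ)
    intro u
    simp only [phiKer]
    rw [show u + (x - 1) = x + u - 1 by ring, show u + -(x + 1) = -(x - u + 1) by ring,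
      show u + (x + 1) = x + u + 1 by ring, show u + -(x - 1) = -(x - u - 1) by ring,
      Real.cosh_neg, Real.cosh_neg]
  · intro u v β hu hv hβ
    refine le_trans (main_bound hv (fun x => phiKer x u v)
      (u - 1) (1 - u) (u + 1) (-(u + 1)) ?_) (key v β hv hβ)
    intro x
    simp only [phiKer]
    rw [show x + (u - 1) = x + u - 1 by ring, show x + (1 - u) = x - u + 1 by ring,
      show x + (u + 1) = x + u + 1 by ring, show x + -(u + 1) = x - u - 1 by ring]
end

section
/- Let β∈(0,1], let f be integrable on (0,∞) and let g be measurable on (0,∞) with ‖g‖_{L_1^{0,β}} = ∫₀^∞ |g(v)| K₀(βv) dv < ∞. Then the double integral defining (f⋆g)(x) converges absolutely for almost every x>0, the function f⋆g is integrable on (0,∞), and ‖f⋆g‖_{L_1(0,∞)} ≤ 2·‖f‖_{L_1(0,∞)}·‖g‖_{L_1^{0,β}}. -/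
open MeasureTheory Real Set

/-! `φ(·, u, v)` is a signed sum of four translates of `t ↦ exp (-v cosh t)`, whose integral over
`ℝ` is `2 K₀(v)`; hence `∫ |φ(x, u, v)| dx ≤ 8 K₀(v) ≤ 8 K₀(βv)`, since `K₀` is decreasing. By
Tonelli the integrand `φ(x, u, v) f(u) g(v)` is therefore integrable on `(0, ∞)³` with norm at most
`8 ‖f‖₁ ‖g‖_{L₁^{0,β}}`, and Fubini gives the a.e. absolute convergence of the double integral and,
with the factor `1/4`, the bound. -/

section ProdKernel

variable {α β E : Type*} [MeasurableSpace α] [MeasurableSpace β] {μ : Measure α} {ν : Measure β}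
  [SFinite μ] [SFinite ν] [NormedAddCommGroup E] {F : α × β → E} {M : β → ℝ}

theorem integrable_prod_of_integral_norm_le (hF : AEStronglyMeasurable F (μ.prod ν))
    (hslice : ∀ᵐ y ∂ν, Integrable (fun x => F (x, y)) μ)
    (hle : ∀ᵐ y ∂ν, ∫ x, ‖F (x, y)‖ ∂μ ≤ M y) (hM : Integrable M ν) :
    Integrable F (μ.prod ν) := by
  refine (integrable_prod_iff' hF).2 ⟨hslice, hM.mono' hF.norm.prod_swap.integral_prod_right' ?_⟩
  filter_upwards [hle] with y hy
  rwa [Real.norm_of_nonneg (integral_nonneg fun _ => norm_nonneg _)]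

theorem integral_norm_integral_prod_le [NormedSpace ℝ E] (hF : Integrable F (μ.prod ν))
    (hle : ∀ᵐ y ∂ν, ∫ x, ‖F (x, y)‖ ∂μ ≤ M y) (hM : Integrable M ν) :
    ∫ x, ‖∫ y, F (x, y) ∂ν‖ ∂μ ≤ ∫ y, M y ∂ν :=
  calc ∫ x, ‖∫ y, F (x, y) ∂ν‖ ∂μ ≤ ∫ x, ∫ y, ‖F (x, y)‖ ∂ν ∂μ :=
        integral_mono hF.integral_prod_left.norm hF.integral_norm_prod_left
          fun _ => norm_integral_le_integral_norm _
    _ = ∫ y, ∫ x, ‖F (x, y)‖ ∂μ ∂ν := integral_integral_swap hF.norm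
    _ ≤ ∫ y, M y ∂ν := integral_mono_ae hF.norm.integral_prod_right hM hle

end ProdKernel

theorem sq_div_four_le_cosh (t : ℝ) : t ^ 2 / 4 ≤ cosh t := by
  rw [← cosh_abs, cosh_eq, ← sq_abs]
  nlinarith [quadratic_le_exp_of_nonneg (abs_nonneg t), add_one_le_exp (-|t|)]

section Kernel

variable {v : ℝ}

theorem integrable_exp_neg_mul_cosh (hv : 0 < v) : Integrable fun t => exp (-v * cosh t) := by
  refine (integrable_exp_neg_mul_sq (by positivity : 0 < v / 4)).mono' (by fun_prop) ?_
  refine .of_forall fun t => ?_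
  rw [Real.norm_of_nonneg (exp_pos _).le, exp_le_exp]
  nlinarith [sq_div_four_le_cosh t]

theorem integral_exp_neg_mul_cosh (v : ℝ) : ∫ t, exp (-v * cosh t) = 2 * K0 v := by
  rw [K0, ← integral_comp_abs (f := fun t => exp (-v * cosh t))]
  simp only [cosh_abs]

theorem integral_exp_neg_mul_cosh_add (v a : ℝ) :
    ∫ t, exp (-v * cosh (t + a)) = 2 * K0 v :=
  (integral_add_right_eq_self (fun t => exp (-v * cosh t)) a).trans (integral_exp_neg_mul_cosh v)

theorem K0_antitoneOn : AntitoneOn K0 (Ioi 0) := fun v (hv : 0 < v) w (hw : 0 < w) _ =>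
  setIntegral_mono_on (integrable_exp_neg_mul_cosh hw).integrableOn
    (integrable_exp_neg_mul_cosh hv).integrableOn measurableSet_Ioi fun t _ => by
      rw [exp_le_exp]; nlinarith [cosh_pos t]

theorem phiKer_eq (x u v : ℝ) : phiKer x u v = exp (-v * cosh (x + (u - 1)))
    + exp (-v * cosh (x + (1 - u))) - exp (-v * cosh (x + (u + 1)))
    - exp (-v * cosh (x + (-u - 1))) := by
  unfold phiKer; ring_nf

theorem abs_phiKer_le (x u v : ℝ) : |phiKer x u v| ≤ exp (-v * cosh (x + (u - 1)))
    + exp (-v * cosh (x + (1 - u))) + exp (-v * cosh (x + (u + 1)))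
    + exp (-v * cosh (x + (-u - 1))) := by
  rw [phiKer_eq, abs_le]
  constructor <;> linarith [exp_pos (-v * cosh (x + (u - 1))), exp_pos (-v * cosh (x + (1 - u))),
    exp_pos (-v * cosh (x + (u + 1))), exp_pos (-v * cosh (x + (-u - 1)))]

theorem integrable_phiKer (hv : 0 < v) (u : ℝ) : Integrable fun x => phiKer x u v := by
  simp only [phiKer_eq]
  have h := (integrable_exp_neg_mul_cosh hv).comp_add_right
  exact (((h _).add (h _)).sub (h _)).sub (h _)

theorem integral_abs_phiKer_le (hv : 0 < v) (u : ℝ) : ∫ x, |phiKer x u v| ≤ 8 * K0 v := by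
  have h := (integrable_exp_neg_mul_cosh hv).comp_add_right
  calc ∫ x, |phiKer x u v|
      ≤ ∫ x, (exp (-v * cosh (x + (u - 1))) + exp (-v * cosh (x + (1 - u)))
          + exp (-v * cosh (x + (u + 1))) + exp (-v * cosh (x + (-u - 1)))) :=
        integral_mono (integrable_phiKer hv u).abs (((h _).add (h _)).add (h _) |>.add (h _))
          (abs_phiKer_le · u v)
    _ = 8 * K0 v := by
      rw [integral_add (((h _).fun_add (h _)).fun_add (h _)) (h _),
        integral_add ((h _).fun_add (h _)) (h _), integral_add (h _) (h _)]
      simp only [integral_exp_neg_mul_cosh_add]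
      ring

theorem setIntegral_norm_phiKer_mul_le {β u : ℝ} (hβ : β ∈ Ioc 0 1) (hv : 0 < v) (a b : ℝ) :
    ∫ x in Ioi 0, ‖phiKer x u v * a * b‖ ≤ |a| * (8 * (|b| * K0 (β * v))) := by
  have hK : K0 v ≤ K0 (β * v) :=
    K0_antitoneOn (mul_pos hβ.1 hv) hv (mul_le_of_le_one_left hv.le hβ.2)
  calc ∫ x in Ioi 0, ‖phiKer x u v * a * b‖ = (∫ x in Ioi 0, |phiKer x u v|) * (|a| * |b|) := by
        simp only [norm_mul, Real.norm_eq_abs, mul_assoc, integral_mul_const]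
    _ ≤ (∫ x, |phiKer x u v|) * (|a| * |b|) := by
        gcongr ?_ * _
        exact setIntegral_le_integral (integrable_phiKer hv u).abs
          (.of_forall fun _ => abs_nonneg _)
    _ ≤ (8 * K0 (β * v)) * (|a| * |b|) := by
        gcongr
        linarith [integral_abs_phiKer_le hv u]
    _ = |a| * (8 * (|b| * K0 (β * v))) := by ring

end Kernel

theorem aestronglyMeasurable_phiKer_mul {μ ν₁ ν₂ : Measure ℝ} [SFinite ν₁] [SFinite ν₂]
    {f g : ℝ → ℝ} (hf : AEStronglyMeasurable f ν₁) (hg : Measurable g) :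
    AEStronglyMeasurable (fun p : ℝ × (ℝ × ℝ) => phiKer p.1 p.2.1 p.2.2 * f p.2.1 * g p.2.2)
      (μ.prod (ν₁.prod ν₂)) :=
  ((Continuous.aestronglyMeasurable (by unfold phiKer; fun_prop)).mul
    hf.comp_fst.comp_snd).mul (hg.comp (measurable_snd.comp measurable_snd)).aestronglyMeasurable

theorem gconv_L1_bound (β : ℝ) (hβ : β ∈ Set.Ioc (0 : ℝ) 1) (f g : ℝ → ℝ)
    (hf : MeasureTheory.IntegrableOn f (Set.Ioi 0))
    (hg : Measurable g)
    (hgK : MeasureTheory.IntegrableOn (fun v => |g v| * K0 (β * v)) (Set.Ioi 0)) :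
    (∀ᵐ x ∂(MeasureTheory.volume.restrict (Set.Ioi (0 : ℝ))),
      MeasureTheory.IntegrableOn (fun w : ℝ × ℝ => phiKer x w.1 w.2 * f w.1 * g w.2)
        (Set.Ioi 0 ×ˢ Set.Ioi 0)) ∧
    MeasureTheory.IntegrableOn (gconv f g) (Set.Ioi 0) ∧
    (∫ x in Set.Ioi (0 : ℝ), |gconv f g x|) ≤
      2 * (∫ u in Set.Ioi (0 : ℝ), |f u|) * (∫ v in Set.Ioi (0 : ℝ), |g v| * K0 (β * v)) := by
  set μ := volume.restrict (Ioi (0 : ℝ))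
  set F : ℝ × (ℝ × ℝ) → ℝ := fun p => phiKer p.1 p.2.1 p.2.2 * f p.2.1 * g p.2.2
  set M : ℝ × ℝ → ℝ := fun w => |f w.1| * (8 * (|g w.2| * K0 (β * w.2)))
  have hM : Integrable M (μ.prod μ) := hf.abs.mul_prod (hgK.const_mul 8)
  have hpos : ∀ᵐ w ∂μ.prod μ, 0 < w.2 :=
    Measure.QuasiMeasurePreserving.ae Measure.quasiMeasurePreserving_snd
      (ae_restrict_mem measurableSet_Ioi)
  have hle : ∀ᵐ w ∂μ.prod μ, ∫ x, ‖F (x, w)‖ ∂μ ≤ M w :=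
    hpos.mono fun w hw => setIntegral_norm_phiKer_mul_le (u := w.1) hβ hw (f w.1) (g w.2)
  have hF : Integrable F (μ.prod (μ.prod μ)) :=
    integrable_prod_of_integral_norm_le (aestronglyMeasurable_phiKer_mul hf.1 hg)
      (hpos.mono fun w hw =>
        ((integrable_phiKer hw w.1).mul_const (f w.1)).mul_const (g w.2) |>.integrableOn)
      hle hM
  have hgconv : gconv f g =ᵐ[μ] fun x => 1 / 4 * ∫ w, F (x, w) ∂μ.prod μ := by
    filter_upwards [hF.prod_right_ae] with x hx
    rw [gconv, integral_prod_symm _ hx]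
  refine ⟨?_, (hF.integral_prod_left.const_mul _).congr hgconv.symm, ?_⟩
  · filter_upwards [hF.prod_right_ae] with x hx
    rwa [IntegrableOn, Measure.volume_eq_prod, ← Measure.prod_restrict]
  calc ∫ x in Ioi 0, |gconv f g x| = ∫ x, |1 / 4 * ∫ w, F (x, w) ∂μ.prod μ| ∂μ :=
        integral_congr_ae (hgconv.fun_comp abs)
    _ = 1 / 4 * ∫ x, ‖∫ w, F (x, w) ∂μ.prod μ‖ ∂μ := by
        norm_num [abs_mul, integral_const_mul]
    _ ≤ 1 / 4 * ∫ w, M w ∂μ.prod μ := by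
        gcongr
        exact integral_norm_integral_prod_le hF hle hM
    _ = 1 / 4 * ((∫ u in Ioi 0, |f u|) * ∫ v in Ioi 0, 8 * (|g v| * K0 (β * v))) := by
        rw [← integral_prod_mul]
    _ = 2 * (∫ u in Ioi 0, |f u|) * (∫ v in Ioi 0, |g v| * K0 (β * v)) := by
        rw [integral_const_mul]
        ring
end

section
/- Let p,q∈(1,∞) with 1/p + 1/q = 1, let β∈(0,1], let s ≥ 1, γ₁ > −1 and γ₂ > 0. For any f∈L_p(0,∞) and any measurable g with ‖g‖_{L_q^{0,β}} = (∫₀^∞ |g(v)|^q K₀(βv) dv)^{1/q} < ∞, one has (∫₀^∞ |(f⋆g)(x)|^s x^{γ₁} e^{−γ₂ x} dx)^{1/s} ≤ 2^{1/q} · γ₂^{−(γ₁+1)/s} · Γ(γ₁+1)^{1/s} · ‖f‖_{L_p(0,∞)} · ‖g‖_{L_q^{0,β}}, where Γ is Euler's gamma function. -/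
open MeasureTheory Real Set

/-!
The kernel satisfies `|φ(x,u,v)| ≤ 4 e^{-v}`, and since each of its four terms is a translate
in `u` of `exp (-v cosh ·)` and `β ≤ 1`, also `∫₀^∞ |φ(x,u,v)| du ≤ 8 K₀(βv)`. Hölder's
inequality for the measure `|φ(x,u,v)| du dv` then bounds `|(f ⋆ g)(x)|`, uniformly in `x`, by
`(1/4) 4^{1/p} 8^{1/q} ‖f‖_p ‖g‖ = 2^{1/q} ‖f‖_p ‖g‖`; integrating this bound against
`x^{γ₁} e^{-γ₂ x}` produces the Gamma factor.
-/

open scoped ENNReal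

theorem lintegral_eq_two_mul_setLIntegral_Ioi_of_even {h : ℝ → ℝ≥0∞} (heven : Function.Even h) :
    ∫⁻ t, h t = 2 * ∫⁻ t in Ioi 0, h t := by
  have hreflect : ∫⁻ t in Iic 0, h t = ∫⁻ t in Ioi 0, h t := by
    rw [setLIntegral_congr Iio_ae_eq_Iic.symm, ← (Measure.measurePreserving_neg volume)
      |>.setLIntegral_comp_preimage_emb (Homeomorph.neg ℝ).measurableEmbedding]
    simp only [neg_preimage, neg_Iio, neg_zero]
    exact lintegral_congr heven
  rw [← lintegral_add_compl h measurableSet_Ioi, compl_Ioi, hreflect, two_mul]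

theorem integrableOn_exp_neg_mul_cosh {c : ℝ} (hc : 0 < c) :
    IntegrableOn (fun t => exp (-c * cosh t)) (Ioi 0) := by
  refine (exp_neg_integrableOn_Ioi 0 hc).mono' (by fun_prop) ?_
  filter_upwards [self_mem_ae_restrict measurableSet_Ioi] with t (ht : 0 < t)
  have : t < cosh t := (self_lt_sinh_iff.2 ht).trans (sinh_lt_cosh t)
  rw [norm_of_nonneg (exp_pos _).le, exp_le_exp]
  nlinarith

theorem K0_nonneg (c : ℝ) : 0 ≤ K0 c :=
  integral_nonneg fun _ => (exp_pos _).le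

theorem lintegral_exp_neg_mul_cosh {c : ℝ} (hc : 0 < c) :
    ∫⁻ t, ENNReal.ofReal (exp (-c * cosh t)) = 2 * ENNReal.ofReal (K0 c) := by
  rw [lintegral_eq_two_mul_setLIntegral_Ioi_of_even fun t => by simp only [cosh_neg], K0,
    ofReal_integral_eq_lintegral_ofReal (integrableOn_exp_neg_mul_cosh hc)
      (ae_of_all _ fun _ => (exp_pos _).le)]

theorem setLIntegral_Ioi_exp_neg_mul_cosh_add_le {c : ℝ} (hc : 0 < c) (b : ℝ) :
    ∫⁻ u in Ioi 0, ENNReal.ofReal (exp (-c * cosh (u + b))) ≤ 2 * ENNReal.ofReal (K0 c) := by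
  calc ∫⁻ u in Ioi 0, ENNReal.ofReal (exp (-c * cosh (u + b)))
      ≤ ∫⁻ u, ENNReal.ofReal (exp (-c * cosh (u + b))) := setLIntegral_le_lintegral _ _
    _ = 2 * ENNReal.ofReal (K0 c) := by
      rw [lintegral_add_right_eq_self (fun t => ENNReal.ofReal (exp (-c * cosh t))),
        lintegral_exp_neg_mul_cosh hc]

/-- Since `cosh` is even, each of the four terms of `phiKer` is a translate in `u` of
`exp (-v * cosh ·)`. -/
theorem abs_phiKer_le_of_le {c v : ℝ} (hcv : c ≤ v) (x u : ℝ) :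
    |phiKer x u v| ≤ exp (-c * cosh (u + (x - 1))) + exp (-c * cosh (u + -(x + 1)))
      + exp (-c * cosh (u + (x + 1))) + exp (-c * cosh (u + -(x - 1))) := by
  have hterm (t : ℝ) : 0 < exp (-v * cosh t) ∧ exp (-v * cosh t) ≤ exp (-c * cosh t) := by
    refine ⟨exp_pos _, exp_le_exp.2 ?_⟩
    nlinarith [one_le_cosh t]
  rw [phiKer, show x + u - 1 = u + (x - 1) by ring, show x - u + 1 = -(u + -(x + 1)) by ring,
    show x + u + 1 = u + (x + 1) by ring, show x - u - 1 = -(u + -(x - 1)) by ring,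
    cosh_neg, cosh_neg, abs_le]
  obtain ⟨h₁, h₁'⟩ := hterm (u + (x - 1))
  obtain ⟨h₂, h₂'⟩ := hterm (u + -(x + 1))
  obtain ⟨h₃, h₃'⟩ := hterm (u + (x + 1))
  obtain ⟨h₄, h₄'⟩ := hterm (u + -(x - 1))
  constructor <;> linarith

theorem abs_phiKer_le_four_mul_exp_neg {v : ℝ} (hv : 0 ≤ v) (x u : ℝ) :
    |phiKer x u v| ≤ 4 * exp (-v) := by
  have hterm (t : ℝ) : exp (-v * cosh t) ≤ exp (-v) := by
    rw [exp_le_exp]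
    nlinarith [one_le_cosh t]
  linarith [abs_phiKer_le_of_le (le_refl v) x u, hterm (u + (x - 1)), hterm (u + -(x + 1)),
    hterm (u + (x + 1)), hterm (u + -(x - 1))]

theorem setLIntegral_Ioi_abs_phiKer_le_four (x u : ℝ) :
    ∫⁻ v in Ioi 0, ENNReal.ofReal |phiKer x u v| ≤ 4 := by
  calc ∫⁻ v in Ioi 0, ENNReal.ofReal |phiKer x u v|
      ≤ ∫⁻ v in Ioi 0, ENNReal.ofReal (4 * exp (-v)) := by
        refine setLIntegral_mono' measurableSet_Ioi fun v (hv : 0 < v) => ?_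
        exact ENNReal.ofReal_le_ofReal (abs_phiKer_le_four_mul_exp_neg hv.le x u)
    _ = 4 := by
        rw [← ofReal_integral_eq_lintegral_ofReal, integral_const_mul, integral_exp_neg_Ioi_zero,
          mul_one, ENNReal.ofReal_ofNat]
        · simpa using (exp_neg_integrableOn_Ioi 0 one_pos).const_mul 4
        · exact ae_of_all _ fun v => by positivity

theorem setLIntegral_Ioi_abs_phiKer_le_K0 {β v : ℝ} (hβ : 0 < β) (hβ1 : β ≤ 1) (hv : 0 < v)
    (x : ℝ) : ∫⁻ u in Ioi 0, ENNReal.ofReal |phiKer x u v| ≤ 8 * ENNReal.ofReal (K0 (β * v)) := by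
  set E : ℝ → ℝ≥0∞ := fun t => ENNReal.ofReal (exp (-(β * v) * cosh t))
  have hpt (u : ℝ) : ENNReal.ofReal |phiKer x u v| ≤
      E (u + (x - 1)) + E (u + -(x + 1)) + E (u + (x + 1)) + E (u + -(x - 1)) :=
    (ENNReal.ofReal_le_ofReal (abs_phiKer_le_of_le (mul_le_of_le_one_left hv.le hβ1) x u)).trans
      (ENNReal.ofReal_add_le.trans (add_le_add_left
        (ENNReal.ofReal_add_le.trans (add_le_add_left ENNReal.ofReal_add_le _)) _))
  have hE (b : ℝ) : ∫⁻ u in Ioi 0, E (u + b) ≤ 2 * ENNReal.ofReal (K0 (β * v)) :=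
    setLIntegral_Ioi_exp_neg_mul_cosh_add_le (mul_pos hβ hv) b
  calc ∫⁻ u in Ioi 0, ENNReal.ofReal |phiKer x u v|
      ≤ ∫⁻ u in Ioi 0,
          (E (u + (x - 1)) + E (u + -(x + 1)) + E (u + (x + 1)) + E (u + -(x - 1))) :=
        lintegral_mono hpt
    _ ≤ 8 * ENNReal.ofReal (K0 (β * v)) := by
        rw [lintegral_add_left (by fun_prop), lintegral_add_left (by fun_prop),
          lintegral_add_left (by fun_prop)]
        refine (add_le_add (add_le_add (add_le_add (hE (x - 1)) (hE (-(x + 1)))) (hE (x + 1)))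
          (hE (-(x - 1)))).trans_eq ?_
        ring

section KernelHolder

variable {α β : Type*} [MeasurableSpace α] [MeasurableSpace β] {μ : Measure α} {ν : Measure β}
  [SFinite μ] [SFinite ν]

/-- Hölder's inequality for the measure `K a b ∂μ ∂ν`, followed by Tonelli in each factor. -/
theorem lintegral_lintegral_kernel_mul_le {p q : ℝ} (hpq : p.HolderConjugate q)
    {K : α → β → ℝ≥0∞} (hK : Measurable (Function.uncurry K)) {F : α → ℝ≥0∞} {G : β → ℝ≥0∞}
    (hF : AEMeasurable F μ) (hG : AEMeasurable G ν) {A : ℝ≥0∞} {B : β → ℝ≥0∞}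
    (hA : ∀ᵐ a ∂μ, ∫⁻ b, K a b ∂ν ≤ A) (hB : ∀ᵐ b ∂ν, ∫⁻ a, K a b ∂μ ≤ B b) :
    ∫⁻ b, ∫⁻ a, K a b * F a * G b ∂μ ∂ν ≤
      (A * ∫⁻ a, F a ^ p ∂μ) ^ (1 / p) * (∫⁻ b, B b * G b ^ q ∂ν) ^ (1 / q) := by
  set ρ := (μ.prod ν).withDensity (Function.uncurry K)
  have hF' : AEMeasurable (fun z : α × β => F z.1) (μ.prod ν) := hF.comp_fst
  have hG' : AEMeasurable (fun z : α × β => G z.2) (μ.prod ν) := hG.comp_snd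
  have hρ {H : α × β → ℝ≥0∞} (hH : AEMeasurable H (μ.prod ν)) :
      ∫⁻ z, H z ∂ρ = ∫⁻ z, K z.1 z.2 * H z ∂(μ.prod ν) :=
    lintegral_withDensity_eq_lintegral_mul₀ hK.aemeasurable hH
  have hFp : ∫⁻ z, F z.1 ^ p ∂ρ ≤ A * ∫⁻ a, F a ^ p ∂μ := by
    rw [hρ (hF'.pow_const p), lintegral_prod (fun z => K z.1 z.2 * F z.1 ^ p)
      (hK.aemeasurable.mul (hF'.pow_const p)), ← lintegral_const_mul'' A (hF.pow_const p)]
    refine lintegral_mono_ae (hA.mono fun a ha => ?_)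
    dsimp only
    rw [lintegral_mul_const _ hK.of_uncurry_left]
    gcongr
  have hGq : ∫⁻ z, G z.2 ^ q ∂ρ ≤ ∫⁻ b, B b * G b ^ q ∂ν := by
    rw [hρ (hG'.pow_const q), lintegral_prod_symm (fun z => K z.1 z.2 * G z.2 ^ q)
      (hK.aemeasurable.mul (hG'.pow_const q))]
    refine lintegral_mono_ae (hB.mono fun b hb => ?_)
    dsimp only
    rw [lintegral_mul_const _ hK.of_uncurry_right]
    gcongr
  calc ∫⁻ b, ∫⁻ a, K a b * F a * G b ∂μ ∂ν
      = ∫⁻ z, F z.1 * G z.2 ∂ρ := by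
        rw [hρ (H := fun z => F z.1 * G z.2) (hF'.mul hG'),
          lintegral_prod_symm (fun z => K z.1 z.2 * (F z.1 * G z.2))
            (hK.aemeasurable.mul (hF'.mul hG'))]
        simp only [mul_assoc]
    _ ≤ (∫⁻ z, F z.1 ^ p ∂ρ) ^ (1 / p) * (∫⁻ z, G z.2 ^ q ∂ρ) ^ (1 / q) :=
        ENNReal.lintegral_mul_le_Lp_mul_Lq ρ hpq
          (hF'.mono_ac (withDensity_absolutelyContinuous _ _))
          (hG'.mono_ac (withDensity_absolutelyContinuous _ _))
    _ ≤ _ := by gcongr <;> simp [hpq.pos.le, hpq.symm.pos.le]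

end KernelHolder

theorem MeasureTheory.MemLp.ofReal_integral_abs_rpow {α : Type*} [MeasurableSpace α]
    {μ : Measure α} {f : α → ℝ} {p : ℝ} (hp : 0 < p) (hf : MemLp f (ENNReal.ofReal p) μ) :
    ENNReal.ofReal (∫ a, |f a| ^ p ∂μ) = ∫⁻ a, ENNReal.ofReal |f a| ^ p ∂μ := by
  have hint := hf.integrable_norm_rpow (by simpa using hp) ENNReal.ofReal_ne_top
  simp only [ENNReal.toReal_ofReal hp.le, Real.norm_eq_abs] at hint
  rw [ofReal_integral_eq_lintegral_ofReal hint (ae_of_all _ fun a => by positivity)]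
  simp only [ENNReal.ofReal_rpow_of_nonneg (abs_nonneg _) hp.le]

theorem four_rpow_mul_eight_rpow {p q : ℝ} (hpq : p.HolderConjugate q) :
    (4 : ℝ) ^ (1 / p) * (8 : ℝ) ^ (1 / q) = 4 * 2 ^ (1 / q) := by
  have h4 : (4 : ℝ) = 2 ^ (2 : ℝ) := by norm_num
  have h8 : (8 : ℝ) = 2 ^ (3 : ℝ) := by norm_num
  rw [h4, h8, ← rpow_mul zero_le_two, ← rpow_mul zero_le_two, ← rpow_add zero_lt_two,
    ← rpow_add zero_lt_two]
  congr 1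
  linear_combination 2 * hpq.one_div_add_one_div

theorem ofReal_abs_gconv_le {f g : ℝ → ℝ} (x : ℝ) :
    ENNReal.ofReal |gconv f g x| ≤ ENNReal.ofReal (1 / 4) *
      ∫⁻ v in Ioi 0, ∫⁻ u in Ioi 0,
        ENNReal.ofReal |phiKer x u v| * ENNReal.ofReal |f u| * ENNReal.ofReal |g v| := by
  rw [gconv, abs_mul, ENNReal.ofReal_mul (abs_nonneg _), abs_of_pos (by norm_num : (0:ℝ) < 1 / 4),
    ← Real.enorm_eq_ofReal_abs]
  gcongr
  refine (enorm_integral_le_lintegral_enorm _).trans (lintegral_mono fun v =>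
    (enorm_integral_le_lintegral_enorm _).trans_eq (lintegral_congr fun u => ?_))
  rw [Real.enorm_eq_ofReal_abs, abs_mul, abs_mul, ENNReal.ofReal_mul (by positivity),
    ENNReal.ofReal_mul (abs_nonneg _)]

section Pointwise

variable {p q β : ℝ} (hpq : p.HolderConjugate q) (hβ : 0 < β) (hβ1 : β ≤ 1) {f g : ℝ → ℝ}
  (hf : MemLp f (ENNReal.ofReal p) (volume.restrict (Ioi 0))) (hg : Measurable g)
  (hgK : IntegrableOn (fun v => |g v| ^ q * K0 (β * v)) (Ioi 0))
include hpq hβ hβ1 hf hg hgK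

theorem ofReal_abs_gconv_le_rpow_mul_rpow (x : ℝ) :
    ENNReal.ofReal |gconv f g x| ≤ ENNReal.ofReal (1 / 4) *
      ((4 * ENNReal.ofReal (∫ u in Ioi 0, |f u| ^ p)) ^ (1 / p) *
        (8 * ENNReal.ofReal (∫ v in Ioi 0, |g v| ^ q * K0 (β * v))) ^ (1 / q)) := by
  have hF : ∫⁻ u in Ioi 0, ENNReal.ofReal |f u| ^ p =
      ENNReal.ofReal (∫ u in Ioi 0, |f u| ^ p) :=
    (hf.ofReal_integral_abs_rpow hpq.pos).symm
  have hG : ∫⁻ v in Ioi 0, 8 * ENNReal.ofReal (K0 (β * v)) * ENNReal.ofReal |g v| ^ q =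
      8 * ENNReal.ofReal (∫ v in Ioi 0, |g v| ^ q * K0 (β * v)) := by
    rw [ofReal_integral_eq_lintegral_ofReal hgK
      (ae_of_all _ fun v => by have := K0_nonneg (β * v); positivity),
      ← lintegral_const_mul' _ _ (by simp)]
    refine lintegral_congr fun v => ?_
    rw [ENNReal.ofReal_mul (by positivity),
      ← ENNReal.ofReal_rpow_of_nonneg (abs_nonneg _) hpq.symm.pos.le]
    ring
  have hkernel := lintegral_lintegral_kernel_mul_le hpq
    (K := fun u v => ENNReal.ofReal |phiKer x u v|) (by unfold phiKer; fun_prop)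
    (F := fun u => ENNReal.ofReal |f u|) (G := fun v => ENNReal.ofReal |g v|)
    hf.aestronglyMeasurable.aemeasurable.abs.ennreal_ofReal hg.abs.ennreal_ofReal.aemeasurable
    (A := 4) (ae_of_all _ (setLIntegral_Ioi_abs_phiKer_le_four x))
    (B := fun v => 8 * ENNReal.ofReal (K0 (β * v)))
    ((ae_restrict_mem measurableSet_Ioi).mono fun v hv =>
      setLIntegral_Ioi_abs_phiKer_le_K0 hβ hβ1 hv x)
  rw [hF, hG] at hkernel
  exact (ofReal_abs_gconv_le x).trans (by gcongr)

theorem abs_gconv_le (x : ℝ) :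
    |gconv f g x| ≤ 2 ^ (1 / q) * (∫ u in Ioi 0, |f u| ^ p) ^ (1 / p) *
      (∫ v in Ioi 0, |g v| ^ q * K0 (β * v)) ^ (1 / q) := by
  set RF := ∫ u in Ioi 0, |f u| ^ p
  set RG := ∫ v in Ioi 0, |g v| ^ q * K0 (β * v)
  have hRF : 0 ≤ RF := setIntegral_nonneg measurableSet_Ioi fun u _ => by positivity
  have hRG : 0 ≤ RG :=
    setIntegral_nonneg measurableSet_Ioi fun v _ => by have := K0_nonneg (β * v); positivity
  have hinvp := (one_div_pos.2 hpq.pos).le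
  have hinvq := (one_div_pos.2 hpq.symm.pos).le
  have hbound : ENNReal.ofReal (1 / 4) *
      ((4 * ENNReal.ofReal RF) ^ (1 / p) * (8 * ENNReal.ofReal RG) ^ (1 / q)) =
      ENNReal.ofReal (2 ^ (1 / q) * RF ^ (1 / p) * RG ^ (1 / q)) := by
    rw [← ENNReal.ofReal_ofNat 4, ← ENNReal.ofReal_ofNat 8, ← ENNReal.ofReal_mul (by norm_num),
      ← ENNReal.ofReal_mul (by norm_num), ENNReal.ofReal_rpow_of_nonneg (by positivity) hinvp,
      ENNReal.ofReal_rpow_of_nonneg (by positivity) hinvq, ← ENNReal.ofReal_mul (by positivity),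
      ← ENNReal.ofReal_mul (by norm_num)]
    congr 1
    rw [mul_rpow (by norm_num) hRF, mul_rpow (by norm_num) hRG]
    linear_combination (1 / 4 * RF ^ (1 / p) * RG ^ (1 / q)) * four_rpow_mul_eight_rpow hpq
  exact (ENNReal.ofReal_le_ofReal_iff (by positivity)).1
    ((ofReal_abs_gconv_le_rpow_mul_rpow hpq hβ hβ1 hf hg hgK x).trans_eq hbound)

end Pointwise

theorem integral_Ioi_rpow_mul_exp_neg_mul {a b : ℝ} (ha : -1 < a) (hb : 0 < b) :
    ∫ x in Ioi 0, x ^ a * exp (-b * x) = b ^ (-(a + 1)) * Gamma (a + 1) := by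
  have h := integral_rpow_mul_exp_neg_mul_Ioi (a := a + 1) (by linarith) hb
  rw [add_sub_cancel_right, one_div, inv_rpow hb.le, ← rpow_neg hb.le] at h
  simpa only [neg_mul] using h

theorem setIntegral_Ioi_abs_rpow_mul_rpow_mul_exp_le {h : ℝ → ℝ} {M s a b : ℝ} (hs : 0 < s)
    (ha : -1 < a) (hb : 0 < b) (hh : ∀ x, |h x| ≤ M) :
    (∫ x in Ioi 0, |h x| ^ s * x ^ a * exp (-b * x)) ^ (1 / s) ≤
      M * b ^ (-(a + 1) / s) * Gamma (a + 1) ^ (1 / s) := by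
  have hM : 0 ≤ M := (abs_nonneg _).trans (hh 0)
  have hweight : IntegrableOn (fun x => x ^ a * exp (-b * x)) (Ioi 0) := by
    simpa only [rpow_one] using integrableOn_rpow_mul_exp_neg_mul_rpow ha one_pos hb
  have hnonneg : ∀ᵐ x ∂(volume.restrict (Ioi 0)), 0 ≤ |h x| ^ s * x ^ a * exp (-b * x) := by
    filter_upwards [self_mem_ae_restrict measurableSet_Ioi] with x (hx : 0 < x)
    positivity
  have hle : ∫ x in Ioi 0, |h x| ^ s * x ^ a * exp (-b * x) ≤
      M ^ s * (b ^ (-(a + 1)) * Gamma (a + 1)) := by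
    rw [← integral_Ioi_rpow_mul_exp_neg_mul ha hb, ← integral_const_mul]
    refine integral_mono_of_nonneg hnonneg (hweight.const_mul _) ?_
    filter_upwards [self_mem_ae_restrict measurableSet_Ioi] with x (hx : 0 < x)
    rw [← mul_assoc]
    gcongr
    exact hh x
  have hΓ : 0 < Gamma (a + 1) := Gamma_pos_of_pos (by linarith)
  calc (∫ x in Ioi 0, |h x| ^ s * x ^ a * exp (-b * x)) ^ (1 / s)
      ≤ (M ^ s * (b ^ (-(a + 1)) * Gamma (a + 1))) ^ (1 / s) := by
        gcongr
        exact integral_nonneg_of_ae hnonneg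
    _ = M * b ^ (-(a + 1) / s) * Gamma (a + 1) ^ (1 / s) := by
        rw [mul_rpow (by positivity) (by positivity), mul_rpow (by positivity) hΓ.le,
          ← rpow_mul hM, ← rpow_mul hb.le, mul_one_div_cancel hs.ne', rpow_one, mul_one_div,
          mul_assoc]

theorem gconv_two_parametric_bound_general (p q β s γ₁ γ₂ : ℝ) (hp : 1 < p)
    (hpq : 1 / p + 1 / q = 1) (hβ : β ∈ Set.Ioc (0 : ℝ) 1)
    (hs : 1 ≤ s) (hγ₁ : -1 < γ₁) (hγ₂ : 0 < γ₂)
    (f g : ℝ → ℝ)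
    (hf : MeasureTheory.MemLp f (ENNReal.ofReal p)
      (MeasureTheory.volume.restrict (Set.Ioi 0)))
    (hg : Measurable g)
    (hgK : MeasureTheory.IntegrableOn (fun v => |g v| ^ q * K0 (β * v)) (Set.Ioi 0)) :
    (∫ x in Set.Ioi (0 : ℝ), |gconv f g x| ^ s * x ^ γ₁ * Real.exp (-γ₂ * x)) ^ (1 / s) ≤
      2 ^ (1 / q) * γ₂ ^ (-(γ₁ + 1) / s) * Real.Gamma (γ₁ + 1) ^ (1 / s) *
        (∫ x in Set.Ioi (0 : ℝ), |f x| ^ p) ^ (1 / p) *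
        (∫ v in Set.Ioi (0 : ℝ), |g v| ^ q * K0 (β * v)) ^ (1 / q) := by
  have hconj : p.HolderConjugate q :=
    Real.holderConjugate_iff.2 ⟨hp, by simpa only [one_div] using hpq⟩
  refine (setIntegral_Ioi_abs_rpow_mul_rpow_mul_exp_le (zero_lt_one.trans_le hs) hγ₁ hγ₂
    (abs_gconv_le hconj hβ.1 hβ.2 hf hg hgK)).trans_eq ?_
  ring

theorem gconv_two_parametric_bound (p q β s γ₁ γ₂ : ℝ) (hp : 1 < p) (hq : 1 < q)
    (hpq : 1 / p + 1 / q = 1) (hβ : β ∈ Set.Ioc (0 : ℝ) 1)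
    (hs : 1 ≤ s) (hγ₁ : -1 < γ₁) (hγ₂ : 0 < γ₂)
    (f g : ℝ → ℝ)
    (hf : MeasureTheory.MemLp f (ENNReal.ofReal p)
      (MeasureTheory.volume.restrict (Set.Ioi 0)))
    (hg : Measurable g)
    (hgK : MeasureTheory.IntegrableOn (fun v => |g v| ^ q * K0 (β * v)) (Set.Ioi 0)) :
    (∫ x in Set.Ioi (0 : ℝ), |gconv f g x| ^ s * x ^ γ₁ * Real.exp (-γ₂ * x)) ^ (1 / s) ≤
      2 ^ (1 / q) * γ₂ ^ (-(γ₁ + 1) / s) * Real.Gamma (γ₁ + 1) ^ (1 / s) *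
        (∫ x in Set.Ioi (0 : ℝ), |f x| ^ p) ^ (1 / p) *
        (∫ v in Set.Ioi (0 : ℝ), |g v| ^ q * K0 (β * v)) ^ (1 / q) :=
  gconv_two_parametric_bound_general p q β s γ₁ γ₂ hp hpq hβ hs hγ₁ hγ₂ f g hf hg hgK
end
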